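/- arXiv:1405.3839 — 2 statements merged into one kernel-verified Lean document; each statement's English description precedes it below -/
import Mathlib

section
/- Fix real constants κ̃ > 0 and A₀. For κ > 0 large enough define f_κ(A) = κ·A − (κ²/κ̃)·log(A + κ/κ̃ − A₀) (the osmotic-setting area energy whose minimizer is A₀ and whose effective quadratic coefficient is κ̃). Then for every real A, the difference f_κ(A) − f_κ(A₀) converges to (κ̃/2)·(A − A₀)² as κ → ∞. That is, the osmotic-pressure area energy with κ_α^{(2)} = 0 approaches the conventional quadratic 'area constraint' energy as the surface-tension coefficient κ tends to infinity while the effective coefficient κ̃ and the target area A₀ are held fixed. -/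
open Real Set Filter

/-!
With `x = A - A₀` and `u = κ̃ x / κ`, the logarithm's argument is `(κ / κ̃)(1 + u)`, so
`f_κ(A) - f_κ(A₀) = (κ² / κ̃)(u - log (1 + u))`, while `(κ̃ / 2) x² = (κ² / κ̃) u² / 2`.
The error is therefore `κ² / κ̃` times the cubic Taylor remainder of `log (1 + u)`, which is
`O(|u|³) = O(κ⁻³)`, so the error is `O(1 / κ)`.
-/

noncomputable def osmoticEnergy (κt A₀ κ A : ℝ) : ℝ :=
  κ * A - (κ ^ 2 / κt) * log (A + κ / κt - A₀)

lemma abs_log_one_add_sub_le {u : ℝ} (hu : |u| ≤ 1 / 2) :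
    |log (1 + u) - (u - u ^ 2 / 2)| ≤ 2 * |u| ^ 3 := by
  have h := abs_log_sub_add_sum_range_le (x := -u) (by rw [abs_neg]; linarith) 2
  have hsum : ∑ i ∈ Finset.range 2, (-u) ^ (i + 1) / (i + 1) = -(u - u ^ 2 / 2) := by
    norm_num [Finset.sum_range_succ]
    ring
  rw [hsum, abs_neg, sub_neg_eq_add, add_comm] at h
  calc |log (1 + u) - (u - u ^ 2 / 2)| ≤ |u| ^ 3 / (1 - |u|) := h
    _ ≤ 2 * |u| ^ 3 := by
      rw [div_le_iff₀ (by linarith)]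
      nlinarith [pow_nonneg (abs_nonneg u) 3]

section

variable {κt κ : ℝ} (A₀ A : ℝ)

lemma osmoticEnergy_sub_sub_quadratic (hκt : 0 < κt) (hκ : 0 < κ)
    (hu : 0 < 1 + κt * (A - A₀) / κ) :
    osmoticEnergy κt A₀ κ A - osmoticEnergy κt A₀ κ A₀ - κt / 2 * (A - A₀) ^ 2 =
      -(κ ^ 2 / κt) * (log (1 + κt * (A - A₀) / κ) -
        (κt * (A - A₀) / κ - (κt * (A - A₀) / κ) ^ 2 / 2)) := by
  have harg : A + κ / κt - A₀ = κ / κt * (1 + κt * (A - A₀) / κ) := by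
    field_simp
    ring
  rw [osmoticEnergy, osmoticEnergy, harg, log_mul (by positivity) hu.ne', add_sub_cancel_left]
  field_simp
  ring

lemma abs_osmoticEnergy_sub_sub_quadratic_le (hκt : 0 < κt) (hκ : 0 < κ)
    (hlarge : 2 * κt * |A - A₀| ≤ κ) :
    |osmoticEnergy κt A₀ κ A - osmoticEnergy κt A₀ κ A₀ - κt / 2 * (A - A₀) ^ 2| ≤
      2 * κt ^ 2 * |A - A₀| ^ 3 / κ := by
  set u := κt * (A - A₀) / κ with hu_def
  have hu : |u| ≤ 1 / 2 := by
    rw [hu_def, abs_div, abs_mul, abs_of_pos hκt, abs_of_pos hκ, div_le_iff₀ hκ]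
    linarith
  have hu_pos : 0 < 1 + u := by linarith [neg_abs_le u]
  calc |osmoticEnergy κt A₀ κ A - osmoticEnergy κt A₀ κ A₀ - κt / 2 * (A - A₀) ^ 2|
      = κ ^ 2 / κt * |log (1 + u) - (u - u ^ 2 / 2)| := by
        rw [osmoticEnergy_sub_sub_quadratic A₀ A hκt hκ hu_pos, abs_mul, abs_neg,
          abs_of_pos (by positivity)]
    _ ≤ κ ^ 2 / κt * (2 * |u| ^ 3) := by gcongr; exact abs_log_one_add_sub_le hu
    _ = 2 * κt ^ 2 * |A - A₀| ^ 3 / κ := by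
        rw [hu_def, abs_div, abs_mul, abs_of_pos hκt, abs_of_pos hκ]
        field_simp

end

/-- With the effective quadratic coefficient `κ̃` and target area `A₀` held fixed,
the osmotic-setting area energy `f_κ(A) = κ·A − (κ²/κ̃)·log(A + κ/κ̃ − A₀)`
satisfies `f_κ(A) − f_κ(A₀) → (κ̃/2)·(A − A₀)²` as `κ → ∞`. -/
theorem osmotic_energy_tendsto_area_constraint
    (κt A₀ : ℝ) (hκt : 0 < κt)
    (f : ℝ → ℝ → ℝ)
    (hf : ∀ κ A, f κ A = κ * A - (κ ^ 2 / κt) * Real.log (A + κ / κt - A₀)) :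
    ∀ A : ℝ,
      Tendsto (fun κ => f κ A - f κ A₀) atTop (nhds (κt / 2 * (A - A₀) ^ 2)) := by
  intro A
  have hf' : f = osmoticEnergy κt A₀ := funext₂ hf
  subst hf'
  rw [tendsto_iff_norm_sub_tendsto_zero]
  have hbound : Tendsto (fun κ : ℝ => 2 * κt ^ 2 * |A - A₀| ^ 3 / κ) atTop (nhds 0) :=
    tendsto_const_nhds.div_atTop tendsto_id
  refine squeeze_zero' (Eventually.of_forall fun κ => norm_nonneg _) ?_ hbound
  filter_upwards [eventually_ge_atTop (2 * κt * |A - A₀|), eventually_gt_atTop 0]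
    with κ hlarge hκ
  exact abs_osmoticEnergy_sub_sub_quadratic_le A₀ A hκt hκ hlarge
end

section
/- Let C : [−1, 1] → ℝ be the scaled comb-area function defined by C(ρ) = (arcsin ρ − ρ·√(1 − ρ²))/ρ² for ρ ≠ 0 and C(0) = 0. Then C is strictly monotonically increasing on [−1, 1]. -/
/-!
Away from `0`, `C = N / ρ²` with `N ρ = arcsin ρ - ρ √(1 - ρ²)`, and `N' ρ = 2ρ² / √(1 - ρ²)`,
so `C' ρ = 2 (tan θ - θ) / ρ³` for `θ = arcsin ρ`. Since `tan θ > θ` on `(0, π/2)`, `C` increases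
on `(0, 1]`, where it is positive (`arcsin ρ > ρ`); as `C` is odd with `C 0 = 0`, this extends
to `[-1, 1]`.
-/

open Real Set

/-- The scaled comb-area function
`C(ρ) = (arcsin ρ − ρ·√(1 − ρ²))/ρ²` for `ρ ≠ 0`, `C(0) = 0`. -/
noncomputable def combC (ρ : ℝ) : ℝ :=
  if ρ = 0 then 0 else (Real.arcsin ρ - ρ * Real.sqrt (1 - ρ ^ 2)) / ρ ^ 2

theorem StrictMonoOn.Icc_neg_of_odd {α β : Type*} [AddCommGroup α] [LinearOrder α]
    [IsOrderedAddMonoid α] [AddCommGroup β] [PartialOrder β] [IsOrderedAddMonoid β]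
    {f : α → β} {a : α} (hodd : ∀ x, f (-x) = -f x) (hf : StrictMonoOn f (Icc 0 a))
    (ha : 0 ≤ a) : StrictMonoOn f (Icc (-a) a) := by
  have hneg : StrictMonoOn f (Icc (-a) 0) := by
    intro x hx y hy hxy
    have hmem : ∀ {z}, z ∈ Icc (-a) 0 → -z ∈ Icc 0 a := fun hz =>
      ⟨neg_nonneg.2 hz.2, neg_le.1 hz.1⟩
    have := hf (hmem hy) (hmem hx) (neg_lt_neg hxy)
    rwa [hodd, hodd, neg_lt_neg_iff] at this
  rw [← Icc_union_Icc_eq_Icc (neg_nonpos.2 ha) ha]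
  exact hneg.union hf (isGreatest_Icc (neg_nonpos.2 ha)) (isLeast_Icc ha)

theorem Real.arcsin_lt_div_sqrt_one_sub_sq {x : ℝ} (h0 : 0 < x) (h1 : x < 1) :
    arcsin x < x / √(1 - x ^ 2) := by
  simpa only [tan_arcsin] using lt_tan (arcsin_pos.2 h0) (arcsin_lt_pi_div_two.2 h1)

theorem Real.hasDerivAt_arcsin_sub_mul_sqrt {x : ℝ} (h₁ : -1 < x) (h₂ : x < 1) :
    HasDerivAt (fun ρ => arcsin ρ - ρ * √(1 - ρ ^ 2)) (2 * x ^ 2 / √(1 - x ^ 2)) x := by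
  have hpos : 0 < 1 - x ^ 2 := by nlinarith
  have hs : √(1 - x ^ 2) ^ 2 = 1 - x ^ 2 := sq_sqrt hpos.le
  have hsqrt : HasDerivAt (fun ρ => √(1 - ρ ^ 2)) (-(2 * x) / (2 * √(1 - x ^ 2))) x := by
    simpa using ((hasDerivAt_pow 2 x).const_sub 1).sqrt hpos.ne'
  refine ((hasDerivAt_arcsin h₁.ne' h₂.ne).sub ((hasDerivAt_id' x).mul hsqrt)).congr_deriv ?_
  field_simp [(sqrt_pos.2 hpos).ne']
  linear_combination -hs

theorem combC_zero : combC 0 = 0 :=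
  if_pos rfl

theorem combC_eq_of_ne_zero {ρ : ℝ} (hρ : ρ ≠ 0) :
    combC ρ = (arcsin ρ - ρ * √(1 - ρ ^ 2)) / ρ ^ 2 :=
  if_neg hρ

theorem combC_neg (ρ : ℝ) : combC (-ρ) = -combC ρ := by
  rcases eq_or_ne ρ 0 with rfl | hρ
  · simp only [neg_zero, combC_zero]
  · rw [combC_eq_of_ne_zero (neg_ne_zero.2 hρ), combC_eq_of_ne_zero hρ, arcsin_neg, neg_sq]
    ring

theorem combC_pos {ρ : ℝ} (h0 : 0 < ρ) (h1 : ρ ≤ 1) : 0 < combC ρ := by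
  rw [combC_eq_of_ne_zero h0.ne']
  have hlt : ρ < arcsin ρ := by
    simpa only [sin_arcsin (by linarith) h1] using sin_lt (arcsin_pos.2 h0)
  have hsqrt : √(1 - ρ ^ 2) ≤ 1 := sqrt_le_one.2 (by nlinarith)
  have : ρ * √(1 - ρ ^ 2) ≤ ρ := mul_le_of_le_one_right h0.le hsqrt
  exact div_pos (by linarith) (by positivity)

theorem hasDerivAt_combC {x : ℝ} (hx : x ≠ 0) (h₁ : -1 < x) (h₂ : x < 1) :
    HasDerivAt combC (2 * (x / √(1 - x ^ 2) - arcsin x) / x ^ 3) x := by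
  have hpos : 0 < 1 - x ^ 2 := by nlinarith
  have hs : √(1 - x ^ 2) ^ 2 = 1 - x ^ 2 := sq_sqrt hpos.le
  have hquot := (hasDerivAt_arcsin_sub_mul_sqrt h₁ h₂).div (hasDerivAt_pow 2 x)
    (pow_ne_zero 2 hx)
  have heq : (fun ρ => (arcsin ρ - ρ * √(1 - ρ ^ 2)) / ρ ^ 2) =ᶠ[nhds x] combC := by
    filter_upwards [eventually_ne_nhds hx] with ρ hρ
    exact (combC_eq_of_ne_zero hρ).symm
  refine (hquot.congr_of_eventuallyEq heq.symm).congr_deriv ?_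
  field_simp [(sqrt_pos.2 hpos).ne']
  linear_combination 2 * x ^ 2 * hs

theorem strictMonoOn_combC_Ioc : StrictMonoOn combC (Ioc 0 1) := by
  have hcont : ContinuousOn combC (Ioc 0 1) := by
    refine ContinuousOn.congr ?_ fun ρ hρ => combC_eq_of_ne_zero hρ.1.ne'
    exact ContinuousOn.div (by fun_prop) (by fun_prop) fun ρ hρ => pow_ne_zero 2 hρ.1.ne'
  refine strictMonoOn_of_hasDerivWithinAt_pos (convex_Ioc 0 1) hcont
    (f' := fun x => 2 * (x / √(1 - x ^ 2) - arcsin x) / x ^ 3) ?_ ?_ <;>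
    rw [interior_Ioc] <;> rintro x ⟨h0, h1⟩
  · exact (hasDerivAt_combC h0.ne' (by linarith) h1).hasDerivWithinAt
  · have hgap := sub_pos.2 (arcsin_lt_div_sqrt_one_sub_sq h0 h1)
    positivity

theorem strictMonoOn_combC_Icc_zero_one : StrictMonoOn combC (Icc 0 1) := by
  rw [← Ioc_insert_left zero_le_one, strictMonoOn_insert_iff_of_forall_ge fun x hx => hx.1.le]
  refine ⟨fun ρ hρ _ => ?_, strictMonoOn_combC_Ioc⟩
  simpa only [combC_zero] using combC_pos hρ.1 hρ.2

/-- The scaled comb-area function is strictly monotonically increasing on `[−1, 1]`. -/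
theorem combC_strictMonoOn : StrictMonoOn combC (Set.Icc (-1 : ℝ) 1) :=
  strictMonoOn_combC_Icc_zero_one.Icc_neg_of_odd combC_neg zero_le_one
end
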